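/- arXiv:1602.08002 — 4 statements merged into one kernel-verified Lean document; each statement's English description precedes it below -/
import Mathlib

section
/- Let P be a finite point set with essential dimension K, and let 𝒢 be a minimum-cardinality family of flats of dimension ≥ 1, with dimensions summing to K, covering P. If k ≥ K and Γ is a k-flat spanned by P, then at least k + 1 - K of the flats of 𝒢 are contained in Γ. -/
open scoped Classical

noncomputable def adim {K V : Type*} [Field K] [AddCommGroup V] [Module K V]
    (s : AffineSubspace K V) : ℤ :=
  if s = ⊥ then -1 else (Module.finrank K s.direction : ℤ)

/-- `Q` spans the flat `Γ` of dimension `k`: `Γ` is the affine span of `Q ∩ Γ`. -/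
def Spans {K V : Type*} [Field K] [AddCommGroup V] [Module K V]
    (Q : Set V) (k : ℤ) (Γ : AffineSubspace K V) : Prop :=
  adim Γ = k ∧ affineSpan K (Q ∩ ↑Γ) = Γ

/-- the number of `k`-flats spanned by `Q` (for `k = -1` this counts the empty flat). -/
noncomputable def nFlats (K : Type*) {V : Type*} [Field K] [AddCommGroup V] [Module K V]
    (Q : Set V) (k : ℤ) : ℕ :=
  Nat.card {Γ : AffineSubspace K V // Spans Q k Γ}

/-- the essential dimension of `Q` is at most `t`. -/
def EssDimLE (K : Type*) {V : Type*} [Field K] [AddCommGroup V] [Module K V]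
    (Q : Set V) (t : ℤ) : Prop :=
  ∃ G : Finset (AffineSubspace K V), (∀ Γ ∈ G, 1 ≤ adim Γ) ∧
    (∀ q ∈ Q, ∃ Γ ∈ G, q ∈ Γ) ∧ ∑ Γ ∈ G, adim Γ ≤ t

/-- `g_m(P)`: the maximum size of a subset of `P` of essential dimension at most `m`. -/
noncomputable def gdim (K : Type*) {V : Type*} [Field K] [AddCommGroup V] [Module K V]
    (P : Finset V) (m : ℤ) : ℕ :=
  sSup {c : ℕ | ∃ P' ⊆ P, EssDimLE K (P' : Set V) m ∧ P'.card = c}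

/-
A flat `Λ` of the family meets `Γ` in a flat of dimension `adim Λ` if `Λ ≤ Γ`, and of
dimension at most `adim Λ - 1` otherwise. The points of `P` in `Γ` span `Γ` and are covered by these
intersections, so `Γ` is contained in their join; since the join is subadditive in `adim + 1`,
`k + 1 ≤ ∑_{Λ ∈ G} (adim (Λ ⊓ Γ) + 1) ≤ Kd + #{Λ ∈ G | Λ ≤ Γ}`.
-/

section AffineDimension

variable {K V : Type*} [Field K] [AddCommGroup V] [Module K V]

@[simp] lemma adim_bot : adim (⊥ : AffineSubspace K V) = -1 := if_pos rfl

lemma adim_of_ne_bot {s : AffineSubspace K V} (hs : s ≠ ⊥) :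
    adim s = Module.finrank K s.direction := if_neg hs

lemma le_finset_sup_inf_of_affineSpan_inter_eq {Q : Set V} {Γ : AffineSubspace K V}
    (hΓ : affineSpan K (Q ∩ Γ) = Γ) {G : Finset (AffineSubspace K V)}
    (hG : ∀ q ∈ Q, ∃ Λ ∈ G, q ∈ Λ) : Γ ≤ G.sup (· ⊓ Γ) := by
  nth_rw 1 [← hΓ]
  rw [affineSpan_le]
  rintro q ⟨hqQ, hqΓ⟩
  obtain ⟨Λ, hΛG, hqΛ⟩ := hG q hqQ
  exact Finset.le_sup (f := (· ⊓ Γ)) hΛG ⟨hqΛ, hqΓ⟩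

variable [FiniteDimensional K V]

lemma adim_strictMono : StrictMono (adim : AffineSubspace K V → ℤ) := by
  intro s t hst
  rw [adim_of_ne_bot hst.ne_bot]
  rcases eq_or_ne s ⊥ with rfl | hs
  · rw [adim_bot]
    omega
  · rw [adim_of_ne_bot hs]
    exact_mod_cast Submodule.finrank_lt_finrank_of_lt <|
      AffineSubspace.direction_lt_of_nonempty hst ((AffineSubspace.nonempty_iff_ne_bot s).mpr hs)

lemma adim_mono : Monotone (adim : AffineSubspace K V → ℤ) :=
  adim_strictMono.monotone

lemma adim_sup_add_one_le (s t : AffineSubspace K V) :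
    adim (s ⊔ t) + 1 ≤ (adim s + 1) + (adim t + 1) := by
  rcases eq_or_ne s ⊥ with rfl | hs
  · simp
  rcases eq_or_ne t ⊥ with rfl | ht
  · simp
  obtain ⟨p, hp⟩ := (AffineSubspace.nonempty_iff_ne_bot s).mpr hs
  obtain ⟨q, hq⟩ := (AffineSubspace.nonempty_iff_ne_bot t).mpr ht
  rw [adim_of_ne_bot hs, adim_of_ne_bot ht,
    adim_of_ne_bot (ne_bot_of_le_ne_bot hs le_sup_left), AffineSubspace.direction_sup hp hq]
  have h_sup := Submodule.finrank_add_le_finrank_add_finrank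
    (s.direction ⊔ t.direction) (K ∙ (q -ᵥ p))
  have h_dir := Submodule.finrank_add_le_finrank_add_finrank s.direction t.direction
  have h_line : Module.finrank K (K ∙ (q -ᵥ p)) ≤ 1 := by
    simpa using finrank_span_le_card (R := K) ({q -ᵥ p} : Set V)
  omega

lemma adim_finset_sup_add_one_le {ι : Type*} (s : Finset ι) (f : ι → AffineSubspace K V) :
    adim (s.sup f) + 1 ≤ ∑ i ∈ s, (adim (f i) + 1) := by
  induction s using Finset.induction_on with
  | empty => simp
  | insert i s hi ih =>
    rw [Finset.sup_insert, Finset.sum_insert hi]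
    linarith [adim_sup_add_one_le (f i) (s.sup f)]

lemma adim_inf_add_one_le (Λ Γ : AffineSubspace K V) :
    adim (Λ ⊓ Γ) + 1 ≤ adim Λ + if Λ ≤ Γ then 1 else 0 := by
  split_ifs with h
  · rw [inf_eq_left.mpr h]
  · linarith [adim_strictMono (inf_lt_left.mpr h)]

end AffineDimension

theorem stmt_7_general {K V : Type*} [Field K] [AddCommGroup V] [Module K V] [FiniteDimensional K V]
    (P : Finset V) (Kd : ℤ)
    (G : Finset (AffineSubspace K V))
    (hGsum : ∑ Γ ∈ G, adim Γ = Kd)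
    (hGcov : ∀ p ∈ P, ∃ Γ ∈ G, p ∈ Γ)
    (k : ℤ)
    (Γ : AffineSubspace K V) (hΓ : Spans (P : Set V) k Γ) :
    k + 1 - Kd ≤ ((G.filter (fun Λ => Λ ≤ Γ)).card : ℤ) := by
  obtain ⟨hdim, hspan⟩ := hΓ
  calc k + 1 - Kd = adim Γ + 1 - Kd := by rw [hdim]
    _ ≤ adim (G.sup (· ⊓ Γ)) + 1 - Kd := by
      gcongr
      exact adim_mono (le_finset_sup_inf_of_affineSpan_inter_eq hspan hGcov)
    _ ≤ ∑ Λ ∈ G, (adim (Λ ⊓ Γ) + 1) - Kd := by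
      gcongr
      exact adim_finset_sup_add_one_le G _
    _ ≤ ∑ Λ ∈ G, (adim Λ + if Λ ≤ Γ then 1 else 0) - Kd :=
      sub_le_sub_right (Finset.sum_le_sum fun Λ _ => adim_inf_add_one_le Λ Γ) _
    _ = ((G.filter (fun Λ => Λ ≤ Γ)).card : ℤ) := by
      rw [Finset.sum_add_distrib, hGsum, Finset.sum_boole]
      ring

/-- If `G` is a minimum-cardinality family of flats of dimension ≥ 1, with dimensions summing
to the essential dimension `Kd` of `P`, covering `P`, and if `k ≥ Kd` and `Γ` is a
`k`-flat spanned by `P`, then at least `k + 1 - Kd` flats of `G` are contained in `Γ`. -/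
theorem stmt_7 {K V : Type*} [Field K] [AddCommGroup V] [Module K V] [FiniteDimensional K V]
    (P : Finset V) (Kd : ℤ)
    (hKmin : ¬ EssDimLE K (P : Set V) (Kd - 1))
    (G : Finset (AffineSubspace K V))
    (hG1 : ∀ Γ ∈ G, 1 ≤ adim Γ)
    (hGsum : ∑ Γ ∈ G, adim Γ = Kd)
    (hGcov : ∀ p ∈ P, ∃ Γ ∈ G, p ∈ Γ)
    (hGmin : ∀ G' : Finset (AffineSubspace K V), (∀ Γ ∈ G', 1 ≤ adim Γ) →
      ∑ Γ ∈ G', adim Γ = Kd → (∀ p ∈ P, ∃ Γ ∈ G', p ∈ Γ) → G.card ≤ G'.card)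
    (k : ℤ) (hk : Kd ≤ k)
    (Γ : AffineSubspace K V) (hΓ : Spans (P : Set V) k Γ) :
    k + 1 - Kd ≤ ((G.filter (fun Λ => Λ ≤ Γ)).card : ℤ) :=
  stmt_7_general P Kd G hGsum hGcov k Γ hΓ
end

section
/- Let D ⊂ ℝ^d be the vertex set of the d-dimensional cross-polytope, i.e., D = {±e_1, …, ±e_d} where e_i are the standard basis vectors. Then for every i ≥ 1, every affine i-flat contains at most 2i points of D. -/
open scoped Classical

/-! If `Γ` contains two opposite vertices `±v`, it contains their midpoint `0` and is a linear
subspace; the basis vectors `e_l` in it are linearly independent, so at most `i` indices `l`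
contribute, each with at most two vertices `±e_l`. Otherwise the vertices in `Γ` are signed basis
vectors with distinct supports, hence linearly and so affinely independent, and there are at
most `i + 1 ≤ 2i` of them. -/

def crossPolytopeVertices (ι K : Type*) [DecidableEq ι] [Ring K] : Set (ι → K) :=
  {v | ∃ l, v = Pi.single l 1 ∨ v = -Pi.single l 1}

section CrossPolytope

variable {ι K : Type*} [DecidableEq ι] [Field K]

lemma ncard_crossPolytopeVertices_inter_submodule_le [Finite ι] (W : Submodule K (ι → K)) :
    (crossPolytopeVertices ι K ∩ W).ncard ≤ 2 * Module.finrank K W := by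
  set T : Set ι := {l | Pi.single l 1 ∈ W}
  have hT : T.ncard ≤ Module.finrank K W := by
    rw [← Pi.dim_spanSubset (R := K)]
    refine Submodule.finrank_mono (Submodule.span_le.mpr ?_)
    rintro _ ⟨l, hl, rfl⟩
    rwa [Pi.basisFun_apply]
  have hsub : crossPolytopeVertices ι K ∩ W ⊆
      (fun l => Pi.single l 1) '' T ∪ (fun l => -Pi.single l 1) '' T := by
    rintro v ⟨⟨l, rfl | rfl⟩, hv⟩
    · exact Or.inl ⟨l, hv, rfl⟩
    · exact Or.inr ⟨l, by simpa [T] using W.neg_mem hv, rfl⟩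
  calc (crossPolytopeVertices ι K ∩ W).ncard
      ≤ ((fun l => Pi.single l 1) '' T ∪ (fun l => -Pi.single l 1) '' T).ncard :=
        Set.ncard_le_ncard hsub
    _ ≤ ((fun l => Pi.single l 1) '' T).ncard + ((fun l => -Pi.single l 1) '' T).ncard :=
        Set.ncard_union_le _ _
    _ ≤ T.ncard + T.ncard := add_le_add Set.ncard_image_le Set.ncard_image_le
    _ ≤ 2 * Module.finrank K W := by omega

lemma linearIndepOn_of_subset_crossPolytopeVertices {s : Set (ι → K)}
    (hs : s ⊆ crossPolytopeVertices ι K) (hopp : ∀ v ∈ s, -v ∉ s) :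
    LinearIndepOn K id s := by
  set σ : ι → K := fun l => if Pi.single l 1 ∈ s then 1 else -1
  have hσ : ∀ l, σ l ≠ 0 := fun l => by dsimp only [σ]; split_ifs <;> norm_num
  have hs_eq :
      s = (fun l => Pi.single l (σ l)) '' {l | Pi.single l 1 ∈ s ∨ -Pi.single l 1 ∈ s} := by
    ext v
    constructor
    · intro hv
      obtain ⟨l, rfl | rfl⟩ := hs hv
      · exact ⟨l, Or.inl hv, by simp [σ, hv]⟩
      · have : Pi.single l (1 : K) ∉ s := by simpa using hopp _ hv
        exact ⟨l, Or.inr hv, by simp [σ, this, Pi.single_neg]⟩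
    · rintro ⟨l, hl, rfl⟩
      by_cases h : Pi.single l (1 : K) ∈ s
      · simp [σ, h]
      · simpa [σ, h, Pi.single_neg] using hl.resolve_left h
  rw [hs_eq]
  exact ((Pi.linearIndependent_single_of_ne_zero hσ).linearIndepOn _).id_image

end CrossPolytope

lemma AffineIndependent.ncard_le_finrank_direction_add_one {k V : Type*} [DivisionRing k]
    [AddCommGroup V] [Module k V] [FiniteDimensional k V] {s : Set V} {Γ : AffineSubspace k V}
    (hs : AffineIndependent k ((↑) : s → V)) (hsΓ : s ⊆ Γ) :
    s.ncard ≤ Module.finrank k Γ.direction + 1 := by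
  rcases s.eq_empty_or_nonempty with rfl | hne
  · simp
  have := (finite_set_of_fin_dim_affineIndependent k hs).fintype
  have := hne.to_subtype
  have hrank := hs.finrank_vectorSpan_add_one
  rw [Subtype.range_coe] at hrank
  rw [Set.ncard_eq_toFinset_card', Set.toFinset_card, ← hrank]
  gcongr
  exact Submodule.finrank_mono (vectorSpan_mono k hsΓ)

lemma finrank_direction_eq_of_adim_eq {K V : Type*} [Field K] [AddCommGroup V] [Module K V]
    {Γ : AffineSubspace K V} {n : ℕ} (h : adim Γ = n) : Module.finrank K Γ.direction = n := by
  unfold adim at h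
  split_ifs at h
  omega

/-- Every affine `i`-flat, `i ≥ 1`, contains at most `2i` vertices of the `d`-dimensional
cross-polytope `D = {±e_1, …, ±e_d} ⊂ ℝ^d`. -/
theorem stmt_12 (d : ℕ) (i : ℕ) (hi : 1 ≤ i) (Γ : AffineSubspace ℝ (Fin d → ℝ))
    (hΓ : adim Γ = (i : ℤ)) :
    ({v : Fin d → ℝ | ∃ l, v = Pi.single l (1 : ℝ) ∨ v = -Pi.single l (1 : ℝ)} ∩
      (Γ : Set (Fin d → ℝ))).ncard ≤ 2 * i := by
  have hdir := finrank_direction_eq_of_adim_eq hΓ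
  change (crossPolytopeVertices (Fin d) ℝ ∩ Γ).ncard ≤ 2 * i
  by_cases hopp : ∃ v ∈ crossPolytopeVertices (Fin d) ℝ ∩ Γ, -v ∈ Γ
  · obtain ⟨v, ⟨-, hv⟩, hnv⟩ := hopp
    have h0 : midpoint ℝ v (-v) ∈ Γ := AffineMap.lineMap_mem _ hv hnv
    rw [midpoint_self_neg] at h0
    rw [← AffineSubspace.direction_eq_self_iff_zero_mem.mpr h0, ← hdir]
    exact ncard_crossPolytopeVertices_inter_submodule_le _
  · have hli := linearIndepOn_of_subset_crossPolytopeVertices Set.inter_subset_left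
      fun v hv hnv => hopp ⟨v, hv, hnv.2⟩
    grw [hli.linearIndependent.affineIndependent.ncard_le_finrank_direction_add_one
      Set.inter_subset_right]
    omega
end

section
/- Let P be a finite set of n points in the plane, with at most g_1 points on any line, where 0 < c_1·n < g_1 for some constant c_1, and suppose a line ℓ contains exactly g_1 points of P. Let P' be a set of min(g_1, n - g_1) points of P not on ℓ, and let L be the set of lines containing exactly one point of P ∩ ℓ and at least one point of P'. Then |L| ≥ |P'|²·g_1² / (|P'|·g_1 + |P'|²), which implies |L| ≥ min(|P'|·g_1, g_1²)/2. -/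
open scoped Classical

lemma adim_span_pair {p q : Fin 2 → ℝ} (h : p ≠ q) :
    adim (affineSpan ℝ {p, q}) = 1 := by
  have hne : (affineSpan ℝ ({p, q} : Set (Fin 2 → ℝ))) ≠ ⊥ := by
    rw [← AffineSubspace.nonempty_iff_ne_bot]
    exact ⟨p, mem_affineSpan ℝ (by simp)⟩
  rw [adim, if_neg hne, direction_affineSpan, vectorSpan_pair]
  rw [finrank_span_singleton (sub_ne_zero.mpr h ∘ (by simpa using ·))]
  · norm_num
lemma line_eq_span {m : AffineSubspace ℝ (Fin 2 → ℝ)} (hm : adim m = 1)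
    {p q : Fin 2 → ℝ} (hp : p ∈ m) (hq : q ∈ m) (hpq : p ≠ q) :
    m = affineSpan ℝ {p, q} := by
  have hle : affineSpan ℝ ({p, q} : Set (Fin 2 → ℝ)) ≤ m := by
    rw [affineSpan_le]; intro x hx
    rcases hx with h | h
    · exact h ▸ hp
    · exact (Set.mem_singleton_iff.mp h) ▸ hq
  have hm' : m ≠ ⊥ := by rw [← AffineSubspace.nonempty_iff_ne_bot]; exact ⟨p, hp⟩
  have hdim : Module.finrank ℝ m.direction = 1 := by
    rw [adim, if_neg hm'] at hm; exact_mod_cast hm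
  have hdim' : Module.finrank ℝ (affineSpan ℝ ({p, q} : Set (Fin 2 → ℝ))).direction = 1 := by
    have := adim_span_pair hpq
    have hnb : (affineSpan ℝ ({p, q} : Set (Fin 2 → ℝ))) ≠ ⊥ := by
      rw [← AffineSubspace.nonempty_iff_ne_bot]; exact ⟨p, mem_affineSpan ℝ (by simp)⟩
    rw [adim, if_neg hnb] at this
    exact_mod_cast this
  refine (AffineSubspace.ext_of_direction_eq ?_ ⟨p, mem_affineSpan ℝ (by simp), hp⟩).symm
  exact Submodule.eq_of_le_of_finrank_le (AffineSubspace.direction_le hle) (by rw [hdim, hdim'])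

lemma mem_T_pred (P : Finset (Fin 2 → ℝ)) (ℓ : AffineSubspace ℝ (Fin 2 → ℝ))
    (hℓ : adim ℓ = 1) (P' : Finset (Fin 2 → ℝ)) (hP'ℓ : ∀ p ∈ P', p ∉ ℓ)
    (p q : Fin 2 → ℝ) (hp : p ∈ P') (hq : q ∈ P.filter (fun x => x ∈ ℓ)) :
    adim (affineSpan ℝ {p, q}) = 1 ∧
      (∃! x, x ∈ P ∧ x ∈ ℓ ∧ x ∈ affineSpan ℝ {p, q}) ∧
      ∃ x ∈ P', x ∈ affineSpan ℝ ({p, q} : Set (Fin 2 → ℝ)) := by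
  rw [Finset.mem_filter] at hq
  have hpℓ := hP'ℓ p hp
  have hpq : p ≠ q := fun h => hpℓ (h ▸ hq.2)
  have hpm : p ∈ affineSpan ℝ ({p, q} : Set (Fin 2 → ℝ)) := mem_affineSpan ℝ (by simp)
  have hqm : q ∈ affineSpan ℝ ({p, q} : Set (Fin 2 → ℝ)) := mem_affineSpan ℝ (by simp)
  refine ⟨adim_span_pair hpq, ⟨q, ⟨hq.1, hq.2, hqm⟩, ?_⟩, ⟨p, hp, hpm⟩⟩
  rintro q' ⟨hq'P, hq'ℓ, hq'm⟩
  by_contra hne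
  have h1 : ℓ = affineSpan ℝ {q', q} := line_eq_span hℓ hq'ℓ hq.2 hne
  have h2 : affineSpan ℝ ({p, q} : Set (Fin 2 → ℝ)) = affineSpan ℝ {q', q} :=
    line_eq_span (adim_span_pair hpq) hq'm hqm hne
  exact hpℓ (h1 ▸ h2 ▸ hpm)


set_option maxHeartbeats 1000000 in
/-- Counting the lines joining a maximal collinear subset to the rest: with `g1` the maximal
number of collinear points of `P`, `ℓ` a line attaining it, `P'` a set of
`min(g1, n - g1)` points of `P` off `ℓ`, and `L` the set of lines containing exactly one
point of `P ∩ ℓ` and at least one point of `P'`, we have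
`|L| ≥ |P'|²·g1² / (|P'|·g1 + |P'|²)`, which implies `|L| ≥ min(|P'|·g1, g1²)/2`. -/
theorem stmt_14 (P : Finset (Fin 2 → ℝ)) (g1 : ℕ) (c1 : ℝ)
    (hc1 : 0 < c1 * P.card) (hcg : c1 * P.card < (g1 : ℝ))
    (hmax : ∀ m : AffineSubspace ℝ (Fin 2 → ℝ), adim m = 1 →
      (P.filter (fun p => p ∈ m)).card ≤ g1)
    (ℓ : AffineSubspace ℝ (Fin 2 → ℝ)) (hℓ : adim ℓ = 1)
    (hℓg : (P.filter (fun p => p ∈ ℓ)).card = g1)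
    (P' : Finset (Fin 2 → ℝ)) (hP'sub : P' ⊆ P) (hP'ℓ : ∀ p ∈ P', p ∉ ℓ)
    (hP'card : P'.card = min g1 (P.card - g1)) :
    ((P'.card : ℝ) ^ 2 * (g1 : ℝ) ^ 2 / ((P'.card : ℝ) * g1 + (P'.card : ℝ) ^ 2) ≤
        (Nat.card {m : AffineSubspace ℝ (Fin 2 → ℝ) // adim m = 1 ∧
          (∃! q, q ∈ P ∧ q ∈ ℓ ∧ q ∈ m) ∧ ∃ q ∈ P', q ∈ m} : ℝ)) ∧
      min ((P'.card : ℝ) * g1) ((g1 : ℝ) ^ 2) / 2 ≤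
        (Nat.card {m : AffineSubspace ℝ (Fin 2 → ℝ) // adim m = 1 ∧
          (∃! q, q ∈ P ∧ q ∈ ℓ ∧ q ∈ m) ∧ ∃ q ∈ P', q ∈ m} : ℝ) := by
  classical
  set Q := P.filter (fun p => p ∈ ℓ) with hQdef
  set f : (Fin 2 → ℝ) × (Fin 2 → ℝ) → AffineSubspace ℝ (Fin 2 → ℝ) :=
    fun pq => affineSpan ℝ {pq.1, pq.2} with hfdef
  set T := (P' ×ˢ Q).image f with hTdef
  have hTpred : ∀ l ∈ T, adim l = 1 ∧ (∃! q, q ∈ P ∧ q ∈ ℓ ∧ q ∈ l) ∧ ∃ q ∈ P', q ∈ l := by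
    intro l hl
    rw [hTdef, Finset.mem_image] at hl
    obtain ⟨pq, hpq, rfl⟩ := hl
    rw [Finset.mem_product] at hpq
    exact mem_T_pred P ℓ hℓ P' hP'ℓ pq.1 pq.2 hpq.1 hpq.2
  set a : AffineSubspace ℝ (Fin 2 → ℝ) → ℕ := fun l => (P'.filter (fun p => p ∈ l)).card
    with hadef
  -- the fiber over `l ∈ T` has `a l` elements
  have hfiber : ∀ l ∈ T, ((P' ×ˢ Q).filter (fun pq => f pq = l)).card = a l := by
    intro l hl
    obtain ⟨had, ⟨q0, hq0, huniq⟩, -⟩ := hTpred l hl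
    apply Finset.card_bij (fun pq _ => pq.1)
    · intro pq hpq
      rw [Finset.mem_filter, Finset.mem_product] at hpq
      rw [Finset.mem_filter]
      refine ⟨hpq.1.1, ?_⟩
      rw [← hpq.2]
      exact mem_affineSpan ℝ (by simp)
    · intro pq hpq pq' hpq' heq
      rw [Finset.mem_filter, Finset.mem_product, hQdef, Finset.mem_filter] at hpq hpq'
      have h2 : pq.2 = q0 := huniq pq.2 ⟨hpq.1.2.1, hpq.1.2.2, by
        rw [← hpq.2]; exact mem_affineSpan ℝ (by simp)⟩
      have h2' : pq'.2 = q0 := huniq pq'.2 ⟨hpq'.1.2.1, hpq'.1.2.2, by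
        rw [← hpq'.2]; exact mem_affineSpan ℝ (by simp)⟩
      exact Prod.ext heq (h2.trans h2'.symm)
    · intro p hp
      rw [Finset.mem_filter] at hp
      have hpq0 : p ≠ q0 := fun h => hP'ℓ p hp.1 (h ▸ hq0.2.1)
      refine ⟨(p, q0), ?_, rfl⟩
      rw [Finset.mem_filter, Finset.mem_product]
      refine ⟨⟨hp.1, ?_⟩, ?_⟩
      · rw [hQdef, Finset.mem_filter]; exact ⟨hq0.1, hq0.2.1⟩
      · exact (line_eq_span had hp.2 hq0.2.2 hpq0).symm
  have hQcard : Q.card = g1 := hℓg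
  have hsum : ∑ l ∈ T, a l = P'.card * g1 := by
    have h := Finset.card_eq_sum_card_fiberwise
      (f := f) (s := P' ×ˢ Q) (t := T) (fun x hx => Finset.mem_image_of_mem f hx)
    rw [Finset.card_product, hQcard] at h
    exact (h.trans (Finset.sum_congr rfl hfiber)).symm
  -- sum of squares bound via disjointness of off-diagonal pairs
  have hdisj : ∀ l ∈ T, ∀ l' ∈ T, l ≠ l' →
      Disjoint ((P'.filter (fun p => p ∈ l)).offDiag)
        ((P'.filter (fun p => p ∈ l')).offDiag) := by
    intro l hl l' hl' hne
    rw [Finset.disjoint_left]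
    intro pp h1 h2
    rw [Finset.mem_offDiag] at h1 h2
    have a1 := Finset.mem_filter.mp h1.1
    have a2 := Finset.mem_filter.mp h1.2.1
    have b1 := Finset.mem_filter.mp h2.1
    have b2 := Finset.mem_filter.mp h2.2.1
    have e1 : l = affineSpan ℝ {pp.1, pp.2} :=
      line_eq_span (hTpred l hl).1 a1.2 a2.2 h1.2.2
    have e2 : l' = affineSpan ℝ {pp.1, pp.2} :=
      line_eq_span (hTpred l' hl').1 b1.2 b2.2 h2.2.2
    exact hne (e1.trans e2.symm)
  have hsq : ∑ l ∈ T, (a l) ^ 2 ≤ P'.card ^ 2 + P'.card * g1 := by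
    have h1 : ∀ l ∈ T, (a l) ^ 2 = ((P'.filter (fun p => p ∈ l)).offDiag).card + a l := by
      intro l hl
      rw [Finset.offDiag_card]
      have hal : a l = (P'.filter (fun p => p ∈ l)).card := rfl
      have hle : (P'.filter (fun p => p ∈ l)).card ≤
          (P'.filter (fun p => p ∈ l)).card * (P'.filter (fun p => p ∈ l)).card := by
        rcases Nat.eq_zero_or_pos ((P'.filter (fun p => p ∈ l)).card) with h | h
        · simp [h]
        · exact Nat.le_mul_of_pos_left _ h
      rw [hal, sq]; omega
    rw [Finset.sum_congr rfl h1, Finset.sum_add_distrib, hsum]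
    have h2 : ∑ l ∈ T, ((P'.filter (fun p => p ∈ l)).offDiag).card ≤ P'.card ^ 2 := by
      rw [← Finset.card_biUnion hdisj]
      calc (T.biUnion (fun l => (P'.filter (fun p => p ∈ l)).offDiag)).card
          ≤ (P' ×ˢ P').card := by
            apply Finset.card_le_card
            intro pp hpp
            rw [Finset.mem_biUnion] at hpp
            obtain ⟨l, -, hpp⟩ := hpp
            rw [Finset.mem_offDiag] at hpp
            rw [Finset.mem_product]
            exact ⟨(Finset.mem_filter.mp hpp.1).1, (Finset.mem_filter.mp hpp.2.1).1⟩
        _ = P'.card ^ 2 := by rw [Finset.card_product, sq]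
    omega
  -- Cauchy-Schwarz
  have key : ((P'.card : ℝ) * g1) ^ 2 ≤ (T.card : ℝ) * ((P'.card : ℝ) ^ 2 + P'.card * g1) := by
    have cs := sq_sum_le_card_mul_sum_sq (s := T) (f := fun l => (a l : ℝ))
    have e1 : ∑ l ∈ T, ((a l : ℝ)) = ((P'.card * g1 : ℕ) : ℝ) := by
      rw [← hsum]; push_cast; ring
    have e2 : ∑ l ∈ T, ((a l : ℝ)) ^ 2 ≤ ((P'.card ^ 2 + P'.card * g1 : ℕ) : ℝ) := by
      have : ∑ l ∈ T, ((a l : ℝ)) ^ 2 = ((∑ l ∈ T, (a l) ^ 2 : ℕ) : ℝ) := by push_cast; ring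
      rw [this]
      exact_mod_cast hsq
    rw [e1] at cs
    calc ((P'.card : ℝ) * g1) ^ 2 = ((P'.card * g1 : ℕ) : ℝ) ^ 2 := by push_cast; ring
      _ ≤ (T.card : ℝ) * ∑ l ∈ T, ((a l : ℝ)) ^ 2 := cs
      _ ≤ (T.card : ℝ) * ((P'.card ^ 2 + P'.card * g1 : ℕ) : ℝ) := by
          apply mul_le_mul_of_nonneg_left e2 (by positivity)
      _ = (T.card : ℝ) * ((P'.card : ℝ) ^ 2 + P'.card * g1) := by push_cast; ring
  -- finiteness of the line family and cardinality comparison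
  haveI hfin : Finite {m : AffineSubspace ℝ (Fin 2 → ℝ) // adim m = 1 ∧
      (∃! q, q ∈ P ∧ q ∈ ℓ ∧ q ∈ m) ∧ ∃ q ∈ P', q ∈ m} := by
    apply Finite.of_injective (fun m =>
      ((⟨m.2.2.2.choose, m.2.2.2.choose_spec.1⟩ : {x // x ∈ P'}),
       (⟨m.2.2.1.exists.choose, m.2.2.1.exists.choose_spec.1⟩ : {x // x ∈ P})))
    intro m m' hmm
    obtain ⟨hp1, hp2⟩ := Prod.mk.injEq .. ▸ hmm
    have hp1' : m.2.2.2.choose = m'.2.2.2.choose := congrArg Subtype.val hp1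
    have hq1' : m.2.2.1.exists.choose = m'.2.2.1.exists.choose := congrArg Subtype.val hp2
    have hps := m.2.2.2.choose_spec
    have hqs := m.2.2.1.exists.choose_spec
    have hps' := m'.2.2.2.choose_spec
    have hqs' := m'.2.2.1.exists.choose_spec
    have hne : m.2.2.2.choose ≠ m.2.2.1.exists.choose :=
      fun h => hP'ℓ _ hps.1 (h ▸ hqs.2.1)
    have e1 : m.1 = affineSpan ℝ {m.2.2.2.choose, m.2.2.1.exists.choose} :=
      line_eq_span m.2.1 hps.2 hqs.2.2 hne
    have e2 : m'.1 = affineSpan ℝ {m.2.2.2.choose, m.2.2.1.exists.choose} := by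
      rw [hp1', hq1']
      exact line_eq_span m'.2.1 hps'.2 hqs'.2.2
        (fun h => hP'ℓ _ hps'.1 (h ▸ hqs'.2.1))
    exact Subtype.ext (e1.trans e2.symm)
  have hTN : (T.card : ℕ) ≤ Nat.card {m : AffineSubspace ℝ (Fin 2 → ℝ) // adim m = 1 ∧
      (∃! q, q ∈ P ∧ q ∈ ℓ ∧ q ∈ m) ∧ ∃ q ∈ P', q ∈ m} := by
    rw [← Nat.card_eq_finsetCard T]
    apply Nat.card_le_card_of_injective (fun t => ⟨t.1, hTpred t.1 t.2⟩)
    intro t t' h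
    exact Subtype.ext (Subtype.mk_eq_mk.mp h)
  -- final algebra
  set N : ℝ := (Nat.card {m : AffineSubspace ℝ (Fin 2 → ℝ) // adim m = 1 ∧
      (∃! q, q ∈ P ∧ q ∈ ℓ ∧ q ∈ m) ∧ ∃ q ∈ P', q ∈ m} : ℝ) with hNdef
  have hN0 : 0 ≤ N := by positivity
  have hTle : (T.card : ℝ) ≤ N := by rw [hNdef]; exact_mod_cast hTN
  set x : ℝ := (P'.card : ℝ) with hxdef
  set g : ℝ := (g1 : ℝ) with hgdef
  have hx0 : 0 ≤ x := by positivity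
  have hg1 : 1 ≤ g := by
    have h0 : (0:ℝ) < (g1 : ℝ) := lt_trans hc1 hcg
    have h1 : 1 ≤ g1 := by exact_mod_cast h0
    rw [hgdef]; exact_mod_cast h1
  have hg0 : 0 < g := lt_of_lt_of_le one_pos hg1
  have key2 : (x * g) ^ 2 ≤ N * (x ^ 2 + x * g) :=
    le_trans key (mul_le_mul_of_nonneg_right hTle (by positivity))
  constructor
  · rcases eq_or_lt_of_le hx0 with hx | hx
    · rw [← hx]; simp [hN0]
    · have hden : 0 < x * g + x ^ 2 := add_pos (mul_pos hx hg0) (pow_pos hx 2)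
      rw [div_le_iff₀ hden]
      nlinarith [key2]
  · rcases eq_or_lt_of_le hx0 with hx | hx
    · rw [← hx]
      have hm : min ((0:ℝ) * g) (g ^ 2) = 0 := by
        rw [zero_mul]; exact min_eq_left (sq_nonneg g)
      rw [hm]; simpa using hN0
    · rcases le_total x g with hxg | hgx
      · rw [min_eq_left (by nlinarith)]
        have h1 : (x * g) * (x * g) ≤ N * (2 * (x * g)) := by nlinarith
        have h2 : x * g ≤ 2 * N := by
          have hxg0 : 0 < x * g := by positivity
          nlinarith
        linarith
      · rw [min_eq_right (by nlinarith)]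
        have h1 : (g * g) * (x * x) ≤ (2 * N) * (x * x) := by nlinarith
        have h2 : g * g ≤ 2 * N := le_of_mul_le_mul_right h1 (by positivity)
        nlinarith
end

section
/- (de Bruijn–Erdős) Let P be a set of n points in a projective space, not all collinear. Then P spans at least n distinct lines. -/
open scoped Classical

/-!
Two distinct points of `P` lie on exactly one spanned line, and since `P` is not collinear,
every spanned line misses a point of `P` and every point of `P` misses a spanned line. So the
points of `P` and the lines they span form a configuration satisfying
`Configuration.HasLines`; for those, a double count combined with Hall's marriage theorem
gives at least as many lines as points (`Configuration.HasLines.card_le`).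
-/

open Configuration

section

variable {K V : Type*} [Field K] [AddCommGroup V] [Module K V]

theorem adim_eq_one_iff {Γ : AffineSubspace K V} :
    adim Γ = 1 ↔ Module.finrank K Γ.direction = 1 := by
  unfold adim
  split_ifs with hΓ
  · subst hΓ
    rw [AffineSubspace.direction_bot, finrank_bot]
    norm_num
  · exact Nat.cast_eq_one

theorem adim_affineSpan_pair {q r : V} (h : q ≠ r) : adim line[K, q, r] = 1 := by
  rw [adim_eq_one_iff, direction_affineSpan, vectorSpan_pair,
    finrank_span_singleton (vsub_ne_zero.2 h)]

theorem Collinear.of_subset_of_adim_eq_one {Γ : AffineSubspace K V} (hΓ : adim Γ = 1)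
    {s : Set V} (hs : s ⊆ Γ) : Collinear K s := by
  refine Collinear.subset hs ?_
  rw [Collinear, ← Γ.direction_eq_vectorSpan,
    Module.rank_eq_one_iff_finrank_eq_one.2 (adim_eq_one_iff.1 hΓ)]

theorem eq_affineSpan_pair_of_adim_eq_one {Γ : AffineSubspace K V} (hΓ : adim Γ = 1)
    {q r : V} (hq : q ∈ Γ) (hr : r ∈ Γ) (hqr : q ≠ r) : Γ = line[K, q, r] := by
  have hΓfin := adim_eq_one_iff.1 hΓ
  have : FiniteDimensional K Γ.direction := Module.finite_of_finrank_eq_succ hΓfin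
  have hle : line[K, q, r] ≤ Γ := affineSpan_pair_le_of_mem_of_mem hq hr
  refine (AffineSubspace.eq_of_direction_eq_of_nonempty_of_le ?_
    ⟨q, left_mem_affineSpan_pair K q r⟩ hle).symm
  refine Submodule.eq_of_le_of_finrank_eq (AffineSubspace.direction_le hle) ?_
  rw [hΓfin, ← adim_eq_one_iff, adim_affineSpan_pair hqr]

theorem spans_affineSpan_pair {Q : Set V} {q r : V} (hq : q ∈ Q) (hr : r ∈ Q) (h : q ≠ r) :
    Spans Q 1 line[K, q, r] := by
  refine ⟨adim_affineSpan_pair h, le_antisymm (affineSpan_le.2 Set.inter_subset_right) ?_⟩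
  refine affineSpan_mono K (Set.insert_subset_iff.2 ⟨⟨hq, ?_⟩, ?_⟩)
  · exact left_mem_affineSpan_pair K q r
  · exact Set.singleton_subset_iff.2 ⟨hr, right_mem_affineSpan_pair K q r⟩

theorem Set.Finite.finite_setOf_spans {Q : Set V} (hQ : Q.Finite) (k : ℤ) :
    {Γ : AffineSubspace K V | Spans Q k Γ}.Finite :=
  (hQ.finite_subsets.image (affineSpan K)).subset fun Γ hΓ =>
    ⟨Q ∩ Γ, Set.inter_subset_left, hΓ.2⟩

variable (K) in
abbrev SpannedLine (Q : Set V) : Type _ := {Γ : AffineSubspace K V // Spans Q 1 Γ}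

instance (Q : Set V) : Membership Q (SpannedLine K Q) := ⟨fun l p => (p : V) ∈ l.1⟩

noncomputable abbrev SpannedLine.hasLines {Q : Set V} (hQ : ¬ Collinear K Q) :
    HasLines Q (SpannedLine K Q) where
  exists_point l := by
    by_contra! h
    exact hQ (.of_subset_of_adim_eq_one l.2.1 fun x hx => h ⟨x, hx⟩)
  exists_line p := by
    obtain ⟨q, hq, hqp⟩ : ∃ q ∈ Q, q ≠ p := by
      by_contra! h
      exact hQ ((collinear_singleton K (p : V)).subset h)
    obtain ⟨r, hr, hrl⟩ : ∃ r ∈ Q, r ∉ line[K, q, (p : V)] := by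
      by_contra! h
      exact hQ (.of_subset_of_adim_eq_one (adim_affineSpan_pair hqp) h)
    have hqr : q ≠ r := fun h => hrl (h ▸ left_mem_affineSpan_pair K q _)
    refine ⟨⟨line[K, q, r], spans_affineSpan_pair hq hr hqr⟩, fun hp => hrl ?_⟩
    rw [← eq_affineSpan_pair_of_adim_eq_one (adim_affineSpan_pair hqr)
      (left_mem_affineSpan_pair K q r) hp hqp]
    exact right_mem_affineSpan_pair K q r
  eq_or_eq {p₁ p₂ l₁ l₂} h₁₁ h₂₁ h₁₂ h₂₂ := by
    refine or_iff_not_imp_left.2 fun hne => Subtype.ext ?_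
    have hp : (p₁ : V) ≠ p₂ := Subtype.coe_injective.ne hne
    rw [eq_affineSpan_pair_of_adim_eq_one l₁.2.1 h₁₁ h₂₁ hp,
      eq_affineSpan_pair_of_adim_eq_one l₂.2.1 h₁₂ h₂₂ hp]
  mkLine {p₁ p₂} h :=
    ⟨line[K, (p₁ : V), p₂], spans_affineSpan_pair p₁.2 p₂.2 (Subtype.coe_injective.ne h)⟩
  mkLine_ax _ := ⟨left_mem_affineSpan_pair K _ _, right_mem_affineSpan_pair K _ _⟩

end

theorem stmt_15_general {K V : Type*} [Field K] [AddCommGroup V] [Module K V]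
    (P : Finset V) (hcol : ¬ Collinear K (P : Set V)) :
    P.card ≤ nFlats K (P : Set V) 1 := by
  have := SpannedLine.hasLines hcol
  have : Finite (SpannedLine K (P : Set V)) := (P.finite_toSet.finite_setOf_spans 1).to_subtype
  let := Fintype.ofFinite (SpannedLine K (P : Set V))
  calc P.card = Fintype.card (P : Set V) := (Fintype.card_coe P).symm
    _ ≤ Fintype.card (SpannedLine K (P : Set V)) := HasLines.card_le _ _
    _ = nFlats K (P : Set V) 1 := Nat.card_eq_fintype_card.symm

/-- de Bruijn–Erdős: a set of `n` points, not all collinear, spans at least `n` lines. -/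
theorem stmt_15 {K V : Type*} [Field K] [AddCommGroup V] [Module K V] [FiniteDimensional K V]
    (P : Finset V) (h3 : 3 ≤ P.card) (hcol : ¬ Collinear K (P : Set V)) :
    P.card ≤ nFlats K (P : Set V) 1 :=
  stmt_15_general P hcol
end
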